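/- Let X ⊂ ℝⁿ, x₀ ∈ ℝⁿ, ε > 0, and let H : x₀ * (S(x₀,ε) ∩ X) → B̄(x₀,ε) ∩ X be a Lipschitz homeomorphism preserving the distance to x₀ (i.e. |H(y) - x₀| = |y - x₀| for all y), with Lipschitz constant L. Define r : [0,1] × (B̄(x₀,ε) ∩ X) → B̄(x₀,ε) ∩ X by r(s,x) = H(s·H⁻¹(x) + (1-s)·x₀). Then for every s, s' ∈ [0,1] and every x ∈ B̄(x₀,ε) ∩ X, |r(s,x) - r(s',x)| ≤ L·|s - s'|·|x - x₀|. -/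
import Mathlib


open MeasureTheory

/-- The cone over a set `A` with vertex `x₀`: all points `t•a + (1-t)•x₀`, `a ∈ A`, `t ∈ [0,1]`. -/
def coneOver {E : Type*} [AddCommGroup E] [Module ℝ E] (x₀ : E) (A : Set E) : Set E :=
  {y | ∃ a ∈ A, ∃ t ∈ Set.Icc (0 : ℝ) 1, y = t • a + (1 - t) • x₀}

/-- If `H` is a Lipschitz homeomorphism (with constant `L`) from the cone
`x₀ * (S(x₀,ε) ∩ X)` onto `B̄(x₀,ε) ∩ X` preserving the distance to `x₀`, then the
retraction `r(s,x) = H(s·H⁻¹(x) + (1-s)·x₀)` satisfies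
`|r(s,x) - r(s',x)| ≤ L·|s-s'|·|x-x₀|`. -/
theorem retraction_lipschitz_in_s {n : ℕ} (X : Set (EuclideanSpace ℝ (Fin n)))
    (x₀ : EuclideanSpace ℝ (Fin n)) (ε : ℝ) (hε : 0 < ε) (L : NNReal)
    (H Hinv : EuclideanSpace ℝ (Fin n) → EuclideanSpace ℝ (Fin n))
    (hHmaps : Set.MapsTo H (coneOver x₀ (Metric.sphere x₀ ε ∩ X))
      (Metric.closedBall x₀ ε ∩ X))
    (hHinvmaps : Set.MapsTo Hinv (Metric.closedBall x₀ ε ∩ X)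
      (coneOver x₀ (Metric.sphere x₀ ε ∩ X)))
    (hright : ∀ y ∈ Metric.closedBall x₀ ε ∩ X, H (Hinv y) = y)
    (hleft : ∀ z ∈ coneOver x₀ (Metric.sphere x₀ ε ∩ X), Hinv (H z) = z)
    (hHlip : LipschitzOnWith L H (coneOver x₀ (Metric.sphere x₀ ε ∩ X)))
    (hdist : ∀ y ∈ coneOver x₀ (Metric.sphere x₀ ε ∩ X), dist (H y) x₀ = dist y x₀) :
    ∀ s ∈ Set.Icc (0 : ℝ) 1, ∀ s' ∈ Set.Icc (0 : ℝ) 1, ∀ x ∈ Metric.closedBall x₀ ε ∩ X,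
      dist (H (s • Hinv x + (1 - s) • x₀)) (H (s' • Hinv x + (1 - s') • x₀)) ≤
        (L : ℝ) * |s - s'| * dist x x₀ := by
  intro s hs s' hs' x hx
  set z := Hinv x with hz
  have hzcone : z ∈ coneOver x₀ (Metric.sphere x₀ ε ∩ X) := hHinvmaps hx
  obtain ⟨a, ha, t, ht, hzeq⟩ := hzcone
  -- membership of convex combinations in the cone
  have hmem : ∀ u ∈ Set.Icc (0 : ℝ) 1,
      u • z + (1 - u) • x₀ ∈ coneOver x₀ (Metric.sphere x₀ ε ∩ X) := by
    intro u hu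
    refine ⟨a, ha, u * t, ⟨mul_nonneg hu.1 ht.1, mul_le_one₀ hu.2 ht.1 ht.2⟩, ?_⟩
    rw [hzeq]
    module
  have h1 := hmem s hs
  have h2 := hmem s' hs'
  have key := hHlip.dist_le_mul _ h1 _ h2
  have hdz : dist z x₀ = dist x x₀ := by
    have := hdist z ⟨a, ha, t, ht, hzeq⟩
    rw [← this, hz, hright x hx]
  have hdiff : dist (s • z + (1 - s) • x₀) (s' • z + (1 - s') • x₀)
      = |s - s'| * dist x x₀ := by
    rw [dist_eq_norm, dist_eq_norm] at *
    have : s • z + (1 - s) • x₀ - (s' • z + (1 - s') • x₀) = (s - s') • (z - x₀) := by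
      module
    rw [this, norm_smul, Real.norm_eq_abs, hdz]
  calc dist (H (s • z + (1 - s) • x₀)) (H (s' • z + (1 - s') • x₀))
      ≤ L * dist (s • z + (1 - s) • x₀) (s' • z + (1 - s') • x₀) := key
    _ = L * |s - s'| * dist x x₀ := by rw [hdiff]; ring
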